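/- (Proposition 1, full stacked architecture, attention-based case) Let N, d, d_g, d_w : ℕ, let Θ (for layer 0) and Θ' (for layer 1) each consist of three matrices in Matrix (Fin d_g) (Fin d) ℝ and Matrix (Fin d_g) (Fin d_g) ℝ respectively, and let W : Matrix (Fin d_w) (Fin d_g) ℝ. Define the two-layer cross-set transformation by X₁ := g_att(X₀, Y₀ | Θ), Y₁ := g_att(Y₀, X₀ | Θ), X₂ := g_att(X₁, Y₁ | Θ'), Y₂ := g_att(Y₁, X₁ | Θ'), where the same weights are shared within each layer. Then the resulting matching score F(X₀, Y₀) := CS(X₂, Y₂ | W) is symmetric: F(X₀, Y₀) = F(Y₀, X₀) for all X₀, Y₀ : Fin N → (Fin d → ℝ); and it is permutation invariant: F(X₀ ∘ π, Y₀ ∘ σ) = F(X₀, Y₀) for all permutations π, σ of Fin N (allowing X₀ : Fin N → (Fin d → ℝ), Y₀ : Fin M → (Fin d → ℝ) with π : Equiv.Perm (Fin N), σ : Equiv.Perm (Fin M) for the invariance part). -/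

import Mathlib

/-!
Each attention layer is equivariant under reindexing of its first argument and invariant under
permutations of its second, so permutations of the inputs pass through both layers as
permutations of the outputs, which the double average in `CS` absorbs. Symmetry is the symmetry
of `CS`, i.e. of the dot product.
-/

open Matrix

/-- The cross-similarity of two tuples of feature vectors. -/
noncomputable def CS {N M d dw : ℕ} (W : Matrix (Fin dw) (Fin d) ℝ)
    (X : Fin N → Fin d → ℝ) (Y : Fin M → Fin d → ℝ) : ℝ :=
  (1 / ((N : ℝ) * M)) * ∑ n : Fin N, ∑ m : Fin M,
    max 0 ((W.mulVec (X n) ⬝ᵥ W.mulVec (Y m)) / Real.sqrt dw)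

/-- The attention-based cross-set map (input dimension e, output dimension dg). -/
noncomputable def gAtt {N M e dg : ℕ} (Θ₁ Θ₂ Θ₃ : Matrix (Fin dg) (Fin e) ℝ)
    (X : Fin N → Fin e → ℝ) (Y : Fin M → Fin e → ℝ) : Fin N → Fin dg → ℝ :=
  fun n => (1 / (M : ℝ)) • ∑ m : Fin M,
    max 0 ((Θ₁.mulVec (X n) ⬝ᵥ Θ₂.mulVec (Y m)) / Real.sqrt dg) • Θ₃.mulVec (Y m)

section

variable {N N' M d dw dg e : ℕ}

theorem CS_comm (W : Matrix (Fin dw) (Fin d) ℝ) (X : Fin N → Fin d → ℝ)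
    (Y : Fin M → Fin d → ℝ) : CS W X Y = CS W Y X := by
  unfold CS
  rw [Finset.sum_comm, mul_comm (N : ℝ)]
  simp only [dotProduct_comm]

theorem CS_comp_perm (W : Matrix (Fin dw) (Fin d) ℝ) (X : Fin N → Fin d → ℝ)
    (Y : Fin M → Fin d → ℝ) (π : Equiv.Perm (Fin N)) (σ : Equiv.Perm (Fin M)) :
    CS W (X ∘ π) (Y ∘ σ) = CS W X Y := by
  let F n m := max 0 ((W *ᵥ X n ⬝ᵥ W *ᵥ Y m) / Real.sqrt dw)
  change _ * ∑ n, ∑ m, F (π n) (σ m) = _ * ∑ n, ∑ m, F n m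
  rw [Equiv.sum_comp π fun n => ∑ m, F n (σ m)]
  simp only [Equiv.sum_comp σ (F _)]

theorem gAtt_comp_left (Θ₁ Θ₂ Θ₃ : Matrix (Fin dg) (Fin e) ℝ) (X : Fin N → Fin e → ℝ)
    (Y : Fin M → Fin e → ℝ) (f : Fin N' → Fin N) :
    gAtt Θ₁ Θ₂ Θ₃ (X ∘ f) Y = gAtt Θ₁ Θ₂ Θ₃ X Y ∘ f :=
  rfl

theorem gAtt_comp_perm_right (Θ₁ Θ₂ Θ₃ : Matrix (Fin dg) (Fin e) ℝ) (X : Fin N → Fin e → ℝ)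
    (Y : Fin M → Fin e → ℝ) (σ : Equiv.Perm (Fin M)) :
    gAtt Θ₁ Θ₂ Θ₃ X (Y ∘ σ) = gAtt Θ₁ Θ₂ Θ₃ X Y := by
  funext n
  simp only [gAtt]
  congr 1
  exact Equiv.sum_comp σ fun m => max 0 ((Θ₁ *ᵥ X n ⬝ᵥ Θ₂ *ᵥ Y m) / Real.sqrt dg) • Θ₃ *ᵥ Y m

end

/-- The full two-layer stacked attention-based cross-set architecture, with
weights shared within each layer, composed with CS, is symmetric (taking
M = N) and permutation invariant. -/
theorem stacked_CS_gAtt_symm_and_perm_invariant (N M d dg dw : ℕ)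
    (Θ₁ Θ₂ Θ₃ : Matrix (Fin dg) (Fin d) ℝ)
    (Θ'₁ Θ'₂ Θ'₃ : Matrix (Fin dg) (Fin dg) ℝ)
    (W : Matrix (Fin dw) (Fin dg) ℝ) :
    (∀ X₀ Y₀ : Fin N → Fin d → ℝ,
      CS W (gAtt Θ'₁ Θ'₂ Θ'₃ (gAtt Θ₁ Θ₂ Θ₃ X₀ Y₀) (gAtt Θ₁ Θ₂ Θ₃ Y₀ X₀))
           (gAtt Θ'₁ Θ'₂ Θ'₃ (gAtt Θ₁ Θ₂ Θ₃ Y₀ X₀) (gAtt Θ₁ Θ₂ Θ₃ X₀ Y₀))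
      = CS W (gAtt Θ'₁ Θ'₂ Θ'₃ (gAtt Θ₁ Θ₂ Θ₃ Y₀ X₀) (gAtt Θ₁ Θ₂ Θ₃ X₀ Y₀))
             (gAtt Θ'₁ Θ'₂ Θ'₃ (gAtt Θ₁ Θ₂ Θ₃ X₀ Y₀) (gAtt Θ₁ Θ₂ Θ₃ Y₀ X₀))) ∧
    (∀ (X₀ : Fin N → Fin d → ℝ) (Y₀ : Fin M → Fin d → ℝ)
      (π : Equiv.Perm (Fin N)) (σ : Equiv.Perm (Fin M)),
      CS W (gAtt Θ'₁ Θ'₂ Θ'₃ (gAtt Θ₁ Θ₂ Θ₃ (X₀ ∘ π) (Y₀ ∘ σ)) (gAtt Θ₁ Θ₂ Θ₃ (Y₀ ∘ σ) (X₀ ∘ π)))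
           (gAtt Θ'₁ Θ'₂ Θ'₃ (gAtt Θ₁ Θ₂ Θ₃ (Y₀ ∘ σ) (X₀ ∘ π)) (gAtt Θ₁ Θ₂ Θ₃ (X₀ ∘ π) (Y₀ ∘ σ)))
      = CS W (gAtt Θ'₁ Θ'₂ Θ'₃ (gAtt Θ₁ Θ₂ Θ₃ X₀ Y₀) (gAtt Θ₁ Θ₂ Θ₃ Y₀ X₀))
             (gAtt Θ'₁ Θ'₂ Θ'₃ (gAtt Θ₁ Θ₂ Θ₃ Y₀ X₀) (gAtt Θ₁ Θ₂ Θ₃ X₀ Y₀))) := by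
  refine ⟨fun X₀ Y₀ => CS_comm .., fun X₀ Y₀ π σ => ?_⟩
  simp only [gAtt_comp_perm_right, gAtt_comp_left, CS_comp_perm]
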